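/- A finite graph without looping edges admits an acyclic orientation; moreover the number of acyclic orientations of a graph Γ equals (−1)^{|V(Γ)|} P_Γ(−1), where P_Γ is the chromatic polynomial of Γ. -/

import Mathlib

open Relation

/-- An acyclic orientation of a simple graph `G`: a choice `r` of one direction for each
edge of `G`, supported on adjacent pairs, such that the resulting directed graph
contains no directed cycle. -/
def IsAcyclicOrientation {V : Type*} (G : SimpleGraph V) (r : V → V → Bool) : Prop :=
  (∀ v w, r v w = true → G.Adj v w) ∧
  (∀ v w, G.Adj v w → (r v w = true ↔ ¬ r w v = true)) ∧
  (∀ v, ¬ Relation.TransGen (fun a b => r a b = true) v v)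

section RelLemmas
variable {V : Type*}

/-- Decomposition of transitive closure after adding a single arc `u → v`. -/
lemma tg_ext_decompose {R : V → V → Prop} {u v a b : V}
    (h : TransGen (fun x y => R x y ∨ (x = u ∧ y = v)) a b) :
    TransGen R a b ∨ (ReflTransGen R a u ∧ ReflTransGen R v b) := by
  induction h with
  | single h =>
    rcases h with h | ⟨rfl, rfl⟩
    · exact Or.inl (TransGen.single h)
    · exact Or.inr ⟨ReflTransGen.refl, ReflTransGen.refl⟩
  | tail _ hstep ih =>
    rcases hstep with hstep | ⟨rfl, rfl⟩
    · rcases ih with ih | ⟨h1, h2⟩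
      · exact Or.inl (ih.tail hstep)
      · exact Or.inr ⟨h1, h2.tail hstep⟩
    · rcases ih with ih | ⟨h1, _⟩
      · exact Or.inr ⟨ih.to_reflTransGen, ReflTransGen.refl⟩
      · exact Or.inr ⟨h1, ReflTransGen.refl⟩

lemma tg_ext_cycle {R : V → V → Prop} {u v : V}
    (hacy : ∀ w, ¬ TransGen R w w) (hpath : ¬ ReflTransGen R v u) {w : V}
    (h : TransGen (fun x y => R x y ∨ (x = u ∧ y = v)) w w) : False := by
  rcases tg_ext_decompose h with h | ⟨h1, h2⟩
  · exact hacy w h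
  · exact hpath (h2.trans h1)

lemma rtg_ext_cycle {R : V → V → Prop} {u v : V} (hpath : ReflTransGen R v u) :
    TransGen (fun x y => R x y ∨ (x = u ∧ y = v)) u u := by
  have h0 : TransGen (fun x y => R x y ∨ (x = u ∧ y = v)) u v :=
    TransGen.single (Or.inr ⟨rfl, rfl⟩)
  have h1 : ReflTransGen (fun x y => R x y ∨ (x = u ∧ y = v)) v u :=
    ReflTransGen.mono (fun x y h => Or.inl h) _ _ hpath
  exact h0.trans_left h1

end RelLemmas

section WLemmas
variable {V : Type*} {R : V → V → Prop} {u v : V}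

/-- The "jump" relation of the merge of `u` and `v`. -/
def Jrel (u v x y : V) : Prop := x = y ∨ (x = u ∧ y = v) ∨ (x = v ∧ y = u)

lemma Jrel.trans' {x y z : V} (h1 : Jrel u v x y) (h2 : Jrel u v y z) : Jrel u v x z := by
  unfold Jrel at *; aesop

/-- One step of `R` followed by an optional jump. -/
def Wrel (R : V → V → Prop) (u v x y : V) : Prop := ∃ m, R x m ∧ Jrel u v m y

lemma Wrel.jump {x y y' : V} (h : Wrel R u v x y) (hj : Jrel u v y y') : Wrel R u v x y' := by
  obtain ⟨m, hm, hj'⟩ := h; exact ⟨m, hm, hj'.trans' hj⟩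

lemma tg_wrel_jump {x y y' : V} (h : TransGen (Wrel R u v) x y) (hj : Jrel u v y y') :
    TransGen (Wrel R u v) x y' := by
  induction h with
  | single h => exact TransGen.single (h.jump hj)
  | tail h1 h2 ih =>
    exact TransGen.trans_right h1.to_reflTransGen (TransGen.single (h2.jump hj))

lemma tg_wrel_decompose (hacy : ∀ w, ¬ TransGen R w w)
    (huv : ¬ ReflTransGen R u v) (hvu : ¬ ReflTransGen R v u) {x y : V}
    (h : TransGen (Wrel R u v) x y) :
    TransGen R x y ∨ (ReflTransGen R x u ∧ (y = v ∨ TransGen R v y)) ∨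
      (ReflTransGen R x v ∧ (y = u ∨ TransGen R u y)) := by
  induction h with
  | single h =>
    obtain ⟨m, hm, hj⟩ := h
    rcases hj with rfl | ⟨he1, he2⟩ | ⟨he1, he2⟩
    · exact Or.inl (TransGen.single hm)
    · rw [he1] at hm
      exact Or.inr (Or.inl ⟨ReflTransGen.single hm, Or.inl he2⟩)
    · rw [he1] at hm
      exact Or.inr (Or.inr ⟨ReflTransGen.single hm, Or.inl he2⟩)
  | @tail b c _ hstep ih =>
    obtain ⟨m, hm, hj⟩ := hstep
    rcases ih with ih | ⟨h1, h2⟩ | ⟨h1, h2⟩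
    · have hxm : TransGen R x m := ih.tail hm
      rcases hj with rfl | ⟨he1, he2⟩ | ⟨he1, he2⟩
      · exact Or.inl hxm
      · rw [he1] at hxm
        exact Or.inr (Or.inl ⟨hxm.to_reflTransGen, Or.inl he2⟩)
      · rw [he1] at hxm
        exact Or.inr (Or.inr ⟨hxm.to_reflTransGen, Or.inl he2⟩)
    · have hvm : TransGen R v m := by
        rcases h2 with rfl | h2
        · exact TransGen.single hm
        · exact h2.tail hm
      rcases hj with rfl | ⟨he1, he2⟩ | ⟨he1, he2⟩
      · exact Or.inr (Or.inl ⟨h1, Or.inr hvm⟩)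
      · rw [he1] at hvm
        exact absurd hvm.to_reflTransGen hvu
      · rw [he1] at hvm
        exact absurd hvm (hacy v)
    · have hum : TransGen R u m := by
        rcases h2 with rfl | h2
        · exact TransGen.single hm
        · exact h2.tail hm
      rcases hj with rfl | ⟨he1, he2⟩ | ⟨he1, he2⟩
      · exact Or.inr (Or.inr ⟨h1, Or.inr hum⟩)
      · rw [he1] at hum
        exact absurd hum (hacy u)
      · rw [he1] at hum
        exact absurd hum.to_reflTransGen huv

lemma tg_wrel_cycle (hacy : ∀ w, ¬ TransGen R w w)
    (huv : ¬ ReflTransGen R u v) (hvu : ¬ ReflTransGen R v u) {x : V}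
    (h : TransGen (Wrel R u v) x x) : False := by
  rcases tg_wrel_decompose hacy huv hvu h with h | ⟨h1, h2⟩ | ⟨h1, h2⟩
  · exact hacy x h
  · rcases h2 with rfl | h2
    · exact hvu h1
    · exact hvu (h2.to_reflTransGen.trans h1)
  · rcases h2 with rfl | h2
    · exact huv h1
    · exact huv (h2.to_reflTransGen.trans h1)

end WLemmas

section GraphDefs
variable {V : Type*} [Fintype V] [DecidableEq V]

/-- The setoid merging `u` and `v`. -/
def mSetoid (u v : V) : Setoid V :=
  ⟨fun x y => Jrel u v x y, ⟨fun _ => Or.inl rfl, by unfold Jrel; aesop,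
    fun h1 h2 => h1.trans' h2⟩⟩

instance mSetoidDec (u v : V) : DecidableRel (mSetoid u v).r := fun x y =>
  decidable_of_iff (x = y ∨ (x = u ∧ y = v) ∨ (x = v ∧ y = u)) Iff.rfl

lemma mSetoid_mk_eq {u v x y : V} :
    (Quotient.mk (mSetoid u v) x = Quotient.mk (mSetoid u v) y) ↔ Jrel u v x y :=
  ⟨fun h => Quotient.exact h, fun h => Quotient.sound h⟩

/-- Contraction of the pair `u,v` in `G` (minus resulting loops). -/
def contractG (G : SimpleGraph V) (u v : V) : SimpleGraph (Quotient (mSetoid u v)) where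
  Adj a b := a ≠ b ∧ ∃ x y, G.Adj x y ∧ Quotient.mk (mSetoid u v) x = a ∧
    Quotient.mk (mSetoid u v) y = b
  symm := ⟨by rintro a b ⟨hab, x, y, h, rfl, rfl⟩; exact ⟨hab.symm, y, x, h.symm, rfl, rfl⟩⟩
  loopless := ⟨fun a => by rintro ⟨h, _⟩; exact h rfl⟩

instance mQuotDecEq (u v : V) : DecidableEq (Quotient (mSetoid u v)) :=
  fun a b => Quotient.recOnSubsingleton₂ a b fun x y =>
    decidable_of_iff (x = y ∨ (x = u ∧ y = v) ∨ (x = v ∧ y = u))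
      ⟨fun h => Quotient.sound h, fun h => Quotient.exact h⟩

instance mQuotFintype (u v : V) : Fintype (Quotient (mSetoid u v)) :=
  @Quotient.fintype V _ (mSetoid u v)
    (fun x y => decidable_of_iff (x = y ∨ (x = u ∧ y = v) ∨ (x = v ∧ y = u)) Iff.rfl)

instance contractGDec (G : SimpleGraph V) [DecidableRel G.Adj] (u v : V) :
    DecidableRel (contractG G u v).Adj := fun a b =>
  decidable_of_iff (a ≠ b ∧ ∃ x y, G.Adj x y ∧ Quotient.mk (mSetoid u v) x = a ∧
    Quotient.mk (mSetoid u v) y = b) Iff.rfl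

/-- The quotient by `mSetoid u v` is equivalent to `V` minus `v`. -/
noncomputable def mQuotEquiv {u v : V} (huv : u ≠ v) :
    Quotient (mSetoid u v) ≃ {x : V // x ≠ v} where
  toFun := Quotient.lift (fun x => if h : x = v then ⟨u, huv⟩ else ⟨x, h⟩) (by
    intro x y h
    rcases h with rfl | ⟨rfl, rfl⟩ | ⟨rfl, rfl⟩
    · rfl
    · simp [dif_neg huv]
    · simp [dif_neg huv])
  invFun x := Quotient.mk _ x.1
  left_inv := by
    refine Quotient.ind (fun x => ?_)
    simp only [Quotient.lift_mk]
    by_cases h : x = v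
    · rw [dif_pos h]
      exact Quotient.sound (Or.inr (Or.inl ⟨rfl, h⟩))
    · rw [dif_neg h]
  right_inv := by
    rintro ⟨x, hx⟩
    simp only [Quotient.lift_mk, dif_neg hx]

lemma card_mQuot {u v : V} (huv : u ≠ v) :
    Fintype.card (Quotient (mSetoid u v)) = Fintype.card V - 1 := by
  rw [Fintype.card_congr (mQuotEquiv huv)]
  have : Fintype.card {x : V // ¬ x = v} = Fintype.card V - 1 := by
    rw [Fintype.card_subtype_compl, Fintype.card_subtype_eq]
  convert this using 2

end GraphDefs

section Orient
variable {V : Type*} [Fintype V] [DecidableEq V]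

lemma bool_ext {p q : Bool} (h : (p = true) ↔ (q = true)) : p = q := by
  cases p <;> cases q <;> simp_all

/-- Delete the edge `{u,v}` from an orientation. -/
def delOri (r : V → V → Bool) (u v : V) : V → V → Bool := fun x y =>
  r x y && !(decide (s(x, y) = s(u, v)))

/-- Add the arc `a → b` to an orientation. -/
def extOri (r : V → V → Bool) (a b : V) : V → V → Bool := fun x y =>
  r x y || (decide (x = a) && decide (y = b))

lemma delOri_eq_true {r : V → V → Bool} {u v x y : V} :
    delOri r u v x y = true ↔ r x y = true ∧ ¬ s(x, y) = s(u, v) := by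
  simp only [delOri, Bool.and_eq_true, Bool.not_eq_true', decide_eq_false_iff_not]

lemma extOri_eq_true {r : V → V → Bool} {a b x y : V} :
    extOri r a b x y = true ↔ r x y = true ∨ (x = a ∧ y = b) := by
  simp [extOri]

variable (G : SimpleGraph V) [DecidableRel G.Adj]

instance delDec (u v : V) : DecidableRel (G.deleteEdges {s(u, v)}).Adj := fun x y =>
  decidable_of_iff (G.Adj x y ∧ ¬ s(x, y) = s(u, v)) (by
    rw [SimpleGraph.deleteEdges_adj]; simp)

variable {G}

lemma isAO_del {r : V → V → Bool} (h : IsAcyclicOrientation G r) (u v : V) :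
    IsAcyclicOrientation (G.deleteEdges {s(u, v)}) (delOri r u v) := by
  obtain ⟨hsupp, hskew, hacy⟩ := h
  refine ⟨fun x y hxy => ?_, fun x y hxy => ?_, fun w hw => ?_⟩
  · rw [delOri_eq_true] at hxy
    rw [SimpleGraph.deleteEdges_adj]
    exact ⟨hsupp _ _ hxy.1, by simpa using hxy.2⟩
  · rw [SimpleGraph.deleteEdges_adj] at hxy
    have hne : ¬ s(x, y) = s(u, v) := by simpa using hxy.2
    have hne' : ¬ s(y, x) = s(u, v) := by rwa [Sym2.eq_swap]
    rw [delOri_eq_true, delOri_eq_true]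
    rw [hskew _ _ hxy.1]
    tauto
  · exact hacy w (TransGen.mono (fun a b hab => (delOri_eq_true.1 hab).1) _ _ hw)

/-- An orientation of `G` minus `{a,b}` is positively supported away from that edge. -/
lemma supp_del {r : V → V → Bool} {a b : V}
    (h : IsAcyclicOrientation (G.deleteEdges {s(a, b)}) r) {x y : V}
    (hxy : s(x, y) = s(a, b)) : r x y = false := by
  by_contra hc
  have := h.1 x y (by simpa using hc)
  rw [SimpleGraph.deleteEdges_adj] at this
  exact this.2 (by simpa using hxy)

lemma ext_del_roundtrip {r : V → V → Bool} {a b : V} (hab : G.Adj a b)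
    (h : IsAcyclicOrientation G r) (hr : r a b = true) :
    extOri (delOri r a b) a b = r := by
  funext x y
  apply bool_ext
  rw [extOri_eq_true, delOri_eq_true]
  constructor
  · rintro (⟨h1, _⟩ | ⟨rfl, rfl⟩)
    · exact h1
    · exact hr
  · intro hxy
    by_cases he : s(x, y) = s(a, b)
    · rcases Sym2.eq_iff.1 he with ⟨he1, he2⟩ | ⟨he1, he2⟩
      · exact Or.inr ⟨he1, he2⟩
      · rw [he1, he2] at hxy
        exact absurd hxy ((h.2.1 a b hab).1 hr)
    · exact Or.inl ⟨hxy, he⟩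

lemma del_ext_roundtrip {r : V → V → Bool} {a b u v : V} (hs : s(a, b) = s(u, v))
    (hab : a ≠ b)
    (hsupp : ∀ x y, s(x, y) = s(u, v) → r x y = false) :
    delOri (extOri r a b) u v = r := by
  funext x y
  apply bool_ext
  rw [delOri_eq_true, extOri_eq_true]
  constructor
  · rintro ⟨h1 | ⟨rfl, rfl⟩, h2⟩
    · exact h1
    · exact absurd hs h2
  · intro hxy
    refine ⟨Or.inl hxy, fun hc => ?_⟩
    have := hsupp x y hc
    simp [this] at hxy

/-- Extension of an acyclic orientation of `G - {a,b}` by the arc `a → b` is acyclic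
iff there is no directed path from `b` to `a`. -/
lemma isAO_ext_iff {r : V → V → Bool} {a b : V} (hab : G.Adj a b)
    (hD : IsAcyclicOrientation (G.deleteEdges {s(a, b)}) r) :
    IsAcyclicOrientation G (extOri r a b) ↔
      ¬ ReflTransGen (fun x y => r x y = true) b a := by
  constructor
  · intro h hba
    have := rtg_ext_cycle (R := fun x y => r x y = true) (u := a) (v := b) hba
    refine h.2.2 a (TransGen.mono (fun x y hxy => ?_) _ _ this)
    rw [extOri_eq_true]; exact hxy
  · intro hba
    refine ⟨fun x y hxy => ?_, fun x y hxy => ?_, fun w hw => ?_⟩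
    · rcases extOri_eq_true.1 hxy with h1 | ⟨rfl, rfl⟩
      · exact ((SimpleGraph.deleteEdges_adj).1 (hD.1 _ _ h1)).1
      · exact hab
    · rw [extOri_eq_true, extOri_eq_true]
      by_cases he : s(x, y) = s(a, b)
      · have h1 : r x y = false := supp_del hD he
        have h2 : r y x = false := supp_del hD (by rwa [Sym2.eq_swap])
        rcases Sym2.eq_iff.1 he with ⟨he1, he2⟩ | ⟨he1, he2⟩
        · rw [he1, he2]
          rw [he1, he2] at h1 h2
          simp [h1, h2, hab.ne, hab.ne']
        · rw [he1, he2]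
          rw [he1, he2] at h1 h2
          simp [h1, h2, hab.ne, hab.ne']
      · have hD' : (G.deleteEdges {s(a, b)}).Adj x y := by
          rw [SimpleGraph.deleteEdges_adj]; exact ⟨hxy, by simpa using he⟩
        have hxa : ¬ (x = a ∧ y = b) := by
          rintro ⟨rfl, rfl⟩; exact he rfl
        have hya : ¬ (y = a ∧ x = b) := by
          rintro ⟨rfl, rfl⟩; exact he Sym2.eq_swap
        rw [hD.2.1 x y hD']
        tauto
    · refine tg_ext_cycle (R := fun x y => r x y = true) (u := a) (v := b)
        hD.2.2 hba (TransGen.mono (fun x y hxy => ?_) _ _ hw)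
      rw [extOri_eq_true] at hxy
      exact hxy

lemma rtg_antisymm_of_acyclic {r : V → V → Bool}
    (hacy : ∀ w, ¬ TransGen (fun x y => r x y = true) w w) {a b : V} (hab : a ≠ b)
    (h1 : ReflTransGen (fun x y => r x y = true) a b)
    (h2 : ReflTransGen (fun x y => r x y = true) b a) : False := by
  rcases h1.cases_head with rfl | ⟨c, hc, hcb⟩
  · exact hab rfl
  · exact hacy a ((Relation.TransGen.head' (r := fun x y => r x y = true) hc hcb).trans_left h2)

end Orient

section Split
variable {V : Type*} [Fintype V] [DecidableEq V] {G : SimpleGraph V} [DecidableRel G.Adj]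

lemma delOri_swap (r : V → V → Bool) (u v : V) : delOri r u v = delOri r v u := by
  funext x y
  apply bool_ext
  rw [delOri_eq_true, delOri_eq_true, (Sym2.eq_swap : s(u, v) = s(v, u))]

lemma card_AG_split {u v : V} (huv : G.Adj u v) :
    Nat.card {r : V → V → Bool // IsAcyclicOrientation G r} =
    Nat.card {r : V → V → Bool // IsAcyclicOrientation (G.deleteEdges {s(u, v)}) r} +
    Nat.card {r : V → V → Bool //
      IsAcyclicOrientation (G.deleteEdges {s(u, v)}) r ∧
      ¬ ReflTransGen (fun x y => r x y = true) u v ∧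
      ¬ ReflTransGen (fun x y => r x y = true) v u} := by
  classical
  set P := fun r : V → V → Bool => IsAcyclicOrientation G r with hPdef
  set Q := fun r : V → V → Bool =>
    IsAcyclicOrientation (G.deleteEdges {s(u, v)}) r with hQdef
  have hswap : G.deleteEdges {s(v, u)} = G.deleteEdges {s(u, v)} := by
    rw [(Sym2.eq_swap : s(v, u) = s(u, v))]
  have hextu : ∀ r', Q r' →
      (P (extOri r' u v) ↔ ¬ ReflTransGen (fun x y => r' x y = true) v u) :=
    fun r' h => isAO_ext_iff huv h
  have hextv : ∀ r', Q r' →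
      (P (extOri r' v u) ↔ ¬ ReflTransGen (fun x y => r' x y = true) u v) :=
    fun r' h => isAO_ext_iff huv.symm (by rw [hswap]; exact h)
  have hQsupp : ∀ r', Q r' → ∀ x y, s(x, y) = s(u, v) → r' x y = false :=
    fun r' h x y hxy => supp_del h hxy
  have hQone : ∀ r', Q r' → ¬ P (extOri r' u v) → P (extOri r' v u) := by
    intro r' h hn
    rw [hextv r' h]
    intro hrtg
    rw [hextu r' h] at hn
    push_neg at hn
    exact rtg_antisymm_of_acyclic h.2.2 huv.ne hrtg hn
  have hne2 : ∀ r1 r2 : V → V → Bool, Q r2 → extOri r1 u v ≠ extOri r2 v u := by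
    intro r1 r2 h2 he
    have h1 : extOri r1 u v u v = true := extOri_eq_true.2 (Or.inr ⟨rfl, rfl⟩)
    rw [he] at h1
    rcases extOri_eq_true.1 h1 with h1 | ⟨h1, _⟩
    · rw [hQsupp r2 h2 u v rfl] at h1; exact Bool.false_ne_true h1
    · exact huv.ne h1
  have hinj2 : ∀ r1 r2 : V → V → Bool, Q r1 → Q r2 →
      extOri r1 v u = extOri r2 v u → r1 = r2 := by
    intro r1 r2 h1 h2 he
    have e1 := del_ext_roundtrip (r := r1) (Sym2.eq_swap) huv.ne' (hQsupp r1 h1)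
    have e2 := del_ext_roundtrip (r := r2) (Sym2.eq_swap) huv.ne' (hQsupp r2 h2)
    rw [← e1, ← e2, he]
  have hinj1 : ∀ r1 r2 : V → V → Bool, Q r1 → Q r2 →
      extOri r1 u v = extOri r2 u v → r1 = r2 := by
    intro r1 r2 h1 h2 he
    have e1 := del_ext_roundtrip (r := r1) rfl huv.ne (hQsupp r1 h1)
    have e2 := del_ext_roundtrip (r := r2) rfl huv.ne (hQsupp r2 h2)
    rw [← e1, ← e2, he]
  rw [← Nat.card_sum]
  symm
  apply Nat.card_eq_of_bijective (f := fun g => match g with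
    | Sum.inl r' => if h2 : P (extOri r'.1 u v) then (⟨extOri r'.1 u v, h2⟩ :
        {r : V → V → Bool // P r}) else ⟨extOri r'.1 v u, hQone r'.1 r'.2 h2⟩
    | Sum.inr r' => ⟨extOri r'.1 v u, (hextv r'.1 r'.2.1).2 r'.2.2.1⟩)
  constructor
  · rintro (r1 | r1) (r2 | r2) heq
    · by_cases hc1 : P (extOri r1.1 u v) <;> by_cases hc2 : P (extOri r2.1 u v) <;>
        simp only [dif_pos, dif_neg, hc1, hc2, dite_true, dite_false] at heq <;>
        rw [Subtype.mk_eq_mk] at heq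
      · exact congrArg _ (Subtype.ext (hinj1 _ _ r1.2 r2.2 heq))
      · exact absurd heq (hne2 _ _ r2.2)
      · exact absurd heq.symm (hne2 _ _ r1.2)
      · exact congrArg _ (Subtype.ext (hinj2 _ _ r1.2 r2.2 heq))
    · by_cases hc1 : P (extOri r1.1 u v) <;>
        simp only [dif_pos, dif_neg, hc1, dite_true, dite_false] at heq <;>
        rw [Subtype.mk_eq_mk] at heq
      · exact absurd heq (hne2 _ _ r2.2.1)
      · -- both are v→u extensions, so r1.1 = r2.1, but then hc1 contradicts B-condition
        have := hinj2 _ _ r1.2 r2.2.1 heq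
        rw [this] at hc1
        exact absurd ((hextu r2.1 r2.2.1).2 r2.2.2.2) hc1
    · by_cases hc2 : P (extOri r2.1 u v) <;>
        simp only [dif_pos, dif_neg, hc2, dite_true, dite_false] at heq <;>
        rw [Subtype.mk_eq_mk] at heq
      · exact absurd heq.symm (hne2 _ _ r1.2.1)
      · have := hinj2 _ _ r1.2.1 r2.2 heq
        rw [← this] at hc2
        exact absurd ((hextu r1.1 r1.2.1).2 r1.2.2.2) hc2
    · rw [Subtype.mk_eq_mk] at heq
      exact congrArg _ (Subtype.ext (hinj2 _ _ r1.2.1 r2.2.1 heq))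
  · intro r
    by_cases hr : r.1 u v = true
    · have hQr : Q (delOri r.1 u v) := isAO_del r.2 u v
      have e1 : extOri (delOri r.1 u v) u v = r.1 := ext_del_roundtrip huv r.2 hr
      refine ⟨Sum.inl ⟨delOri r.1 u v, hQr⟩, ?_⟩
      have hc : P (extOri (delOri r.1 u v) u v) := by rw [e1]; exact r.2
      simp only [dif_pos hc]
      exact Subtype.ext e1
    · have hrvu : r.1 v u = true := by
        by_contra hc
        exact hr ((r.2.2.1 u v huv).2 hc)
      have hQr : Q (delOri r.1 u v) := isAO_del r.2 u v
      have e1 : extOri (delOri r.1 u v) v u = r.1 := by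
        rw [delOri_swap]
        exact ext_del_roundtrip huv.symm r.2 hrvu
      by_cases hc : P (extOri (delOri r.1 u v) u v)
      · refine ⟨Sum.inr ⟨delOri r.1 u v, hQr, ?_, (hextu _ hQr).1 hc⟩, Subtype.ext e1⟩
        rw [← hextv _ hQr, e1]
        exact r.2
      · refine ⟨Sum.inl ⟨delOri r.1 u v, hQr⟩, ?_⟩
        simp only [dif_neg hc]
        exact Subtype.ext e1

end Split

section Contract
variable {V : Type*} [Fintype V] [DecidableEq V] {G : SimpleGraph V} [DecidableRel G.Adj]

variable (G) in
/-- Push an orientation down to the contraction. -/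
def conOri (u v : V) (r : V → V → Bool) :
    Quotient (mSetoid u v) → Quotient (mSetoid u v) → Bool := fun a b =>
  decide (∃ x y, Quotient.mk (mSetoid u v) x = a ∧ Quotient.mk (mSetoid u v) y = b ∧
    r x y = true)

variable (G) in
/-- Lift an orientation of the contraction. -/
def liftOri (u v : V) (r'' : Quotient (mSetoid u v) → Quotient (mSetoid u v) → Bool) :
    V → V → Bool := fun x y =>
  r'' (Quotient.mk (mSetoid u v) x) (Quotient.mk (mSetoid u v) y) &&
    decide ((G.deleteEdges {s(u, v)}).Adj x y)

lemma conOri_eq_true {u v : V} {r : V → V → Bool} {a b : Quotient (mSetoid u v)} :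
    conOri u v r a b = true ↔ ∃ x y, Quotient.mk (mSetoid u v) x = a ∧
      Quotient.mk (mSetoid u v) y = b ∧ r x y = true := by
  simp only [conOri, decide_eq_true_eq]

lemma liftOri_eq_true {u v : V} {r'' : Quotient (mSetoid u v) → Quotient (mSetoid u v) → Bool}
    {x y : V} : liftOri G u v r'' x y = true ↔
      r'' (Quotient.mk (mSetoid u v) x) (Quotient.mk (mSetoid u v) y) = true ∧
      (G.deleteEdges {s(u, v)}).Adj x y := by
  simp only [liftOri, Bool.and_eq_true, decide_eq_true_eq]

lemma del_adj_iff {u v x y : V} : (G.deleteEdges {s(u, v)}).Adj x y ↔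
    G.Adj x y ∧ ¬ s(x, y) = s(u, v) := by
  rw [SimpleGraph.deleteEdges_adj]; simp

lemma del_adj_classes_ne {u v x y : V} (h : (G.deleteEdges {s(u, v)}).Adj x y) :
    Quotient.mk (mSetoid u v) x ≠ Quotient.mk (mSetoid u v) y := by
  intro hc
  rcases Quotient.exact hc with he | ⟨he1, he2⟩ | ⟨he1, he2⟩
  · exact h.ne he
  · exact (del_adj_iff.1 h).2 (by rw [he1, he2])
  · exact (del_adj_iff.1 h).2 (by rw [he1, he2, Sym2.eq_swap])

lemma del_adj_con {u v x y : V} (h : (G.deleteEdges {s(u, v)}).Adj x y) :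
    (contractG G u v).Adj (Quotient.mk (mSetoid u v) x) (Quotient.mk (mSetoid u v) y) :=
  ⟨del_adj_classes_ne h, x, y, (del_adj_iff.1 h).1, rfl, rfl⟩

lemma con_adj_del {u v : V} {a b : Quotient (mSetoid u v)} (h : (contractG G u v).Adj a b) :
    ∃ x y, (G.deleteEdges {s(u, v)}).Adj x y ∧ Quotient.mk (mSetoid u v) x = a ∧
      Quotient.mk (mSetoid u v) y = b := by
  obtain ⟨hne, x, y, hxy, hx, hy⟩ := h
  refine ⟨x, y, del_adj_iff.2 ⟨hxy, fun hc => ?_⟩, hx, hy⟩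
  rcases Sym2.eq_iff.1 hc with ⟨he1, he2⟩ | ⟨he1, he2⟩
  · refine hne ?_
    rw [← hx, ← hy, he1, he2]
    exact Quotient.sound (Or.inr (Or.inl ⟨rfl, rfl⟩))
  · refine hne ?_
    rw [← hx, ← hy, he1, he2]
    exact Quotient.sound (Or.inr (Or.inr ⟨rfl, rfl⟩))

/-- Transitive chains in the contraction descend to `Wrel`-chains. -/
lemma con_tg_descend {u v : V} {r : V → V → Bool} {a b : Quotient (mSetoid u v)}
    (h : TransGen (fun a b => conOri u v r a b = true) a b) :
    ∃ x y, Quotient.mk (mSetoid u v) x = a ∧ Quotient.mk (mSetoid u v) y = b ∧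
      TransGen (Wrel (fun x y => r x y = true) u v) x y := by
  induction h with
  | single h =>
    obtain ⟨x, y, hx, hy, hr⟩ := conOri_eq_true.1 h
    exact ⟨x, y, hx, hy, TransGen.single ⟨y, hr, Or.inl rfl⟩⟩
  | tail _ hstep ih =>
    obtain ⟨x, y, hx, hy, htg⟩ := ih
    obtain ⟨x2, y2, hx2, hy2, hr2⟩ := conOri_eq_true.1 hstep
    have hj : Jrel u v y x2 := Quotient.exact (hx2 ▸ hy)
    exact ⟨x, y2, hx, hy2, (tg_wrel_jump htg hj).tail ⟨y2, hr2, Or.inl rfl⟩⟩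

/-- The B-condition: an acyclic orientation of `G - {u,v}` with no path between `u` and
`v` in either direction. -/
def BCond (G : SimpleGraph V) (u v : V) (r : V → V → Bool) : Prop :=
  IsAcyclicOrientation (G.deleteEdges {s(u, v)}) r ∧
    ¬ ReflTransGen (fun x y => r x y = true) u v ∧
    ¬ ReflTransGen (fun x y => r x y = true) v u

lemma isAO_conOri {u v : V} {r : V → V → Bool} (hB : BCond G u v r) :
    IsAcyclicOrientation (contractG G u v) (conOri u v r) := by
  obtain ⟨hAO, huv', hvu'⟩ := hB
  have hacy := hAO.2.2
  refine ⟨fun a b hab => ?_, fun a b hab => ?_, fun a ha => ?_⟩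
  · obtain ⟨x, y, hx, hy, hr⟩ := conOri_eq_true.1 hab
    rw [← hx, ← hy]
    exact del_adj_con (hAO.1 _ _ hr)
  · constructor
    · intro h1 h2
      obtain ⟨x, y, hx, hy, hr⟩ := conOri_eq_true.1 h1
      obtain ⟨x2, y2, hx2, hy2, hr2⟩ := conOri_eq_true.1 h2
      have hj1 : Jrel u v y x2 := Quotient.exact (hx2 ▸ hy)
      have hj2 : Jrel u v y2 x := Quotient.exact (hx ▸ hy2)
      have hcyc : TransGen (Wrel (fun x y => r x y = true) u v) x x :=
        TransGen.tail (TransGen.single ⟨y, hr, hj1⟩) ⟨y2, hr2, hj2⟩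
      exact tg_wrel_cycle hacy huv' hvu' hcyc
    · intro h2
      obtain ⟨x, y, hxy, hx, hy⟩ := con_adj_del hab
      cases hrxy : r x y with
      | true => exact conOri_eq_true.2 ⟨x, y, hx, hy, hrxy⟩
      | false =>
        have : r y x = true := by
          have hiff := hAO.2.1 x y hxy
          rw [hrxy] at hiff
          simpa using hiff
        exact absurd (conOri_eq_true.2 ⟨y, x, hy, hx, this⟩) h2
  · obtain ⟨x, y, hx, hy, htg⟩ := con_tg_descend ha
    have hj : Jrel u v y x := Quotient.exact (hx ▸ hy)
    exact tg_wrel_cycle hacy huv' hvu' (tg_wrel_jump htg hj)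

end Contract

section Contract2
variable {V : Type*} [Fintype V] [DecidableEq V] {G : SimpleGraph V} [DecidableRel G.Adj]

lemma mk_u_eq_mk_v (u v : V) :
    Quotient.mk (mSetoid u v) u = Quotient.mk (mSetoid u v) v :=
  Quotient.sound (Or.inr (Or.inl ⟨rfl, rfl⟩))

lemma bCond_liftOri {u v : V} (huv : G.Adj u v)
    {r'' : Quotient (mSetoid u v) → Quotient (mSetoid u v) → Bool}
    (hA : IsAcyclicOrientation (contractG G u v) r'') : BCond G u v (liftOri G u v r'') := by
  have htg : ∀ x y : V, TransGen (fun x y => liftOri G u v r'' x y = true) x y →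
      TransGen (fun a b => r'' a b = true) (Quotient.mk (mSetoid u v) x)
        (Quotient.mk (mSetoid u v) y) :=
    fun x y h => TransGen.lift (Quotient.mk (mSetoid u v)) (fun a b hab => (liftOri_eq_true.1 hab).1) _ _ h
  have hrtg : ∀ x y : V, x ≠ y → ReflTransGen (fun x y => liftOri G u v r'' x y = true) x y →
      Quotient.mk (mSetoid u v) x = Quotient.mk (mSetoid u v) y → False := by
    intro x y hne hr hq
    rcases hr.cases_head with he | ⟨c, hc, hcb⟩
    · exact hne he
    · have := htg x y (Relation.TransGen.head'
        (r := fun x y => liftOri G u v r'' x y = true) hc hcb)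
      rw [hq] at this
      exact hA.2.2 _ this
  refine ⟨⟨fun x y hxy => (liftOri_eq_true.1 hxy).2, fun x y hxy => ?_, fun w hw => ?_⟩,
    ?_, ?_⟩
  · have h1 := hA.2.1 _ _ (del_adj_con hxy)
    rw [liftOri_eq_true, liftOri_eq_true]
    constructor
    · rintro ⟨ha, _⟩ ⟨hb, _⟩
      exact (h1.1 ha) hb
    · intro hn
      refine ⟨h1.2 (fun hc => hn ⟨hc, hxy.symm⟩), hxy⟩
  · exact hA.2.2 _ (htg w w hw)
  · exact fun h => hrtg u v huv.ne h (mk_u_eq_mk_v u v)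
  · exact fun h => hrtg v u huv.ne' h (mk_u_eq_mk_v u v).symm

lemma con_lift_rt {u v : V}
    {r'' : Quotient (mSetoid u v) → Quotient (mSetoid u v) → Bool}
    (hA : IsAcyclicOrientation (contractG G u v) r'') :
    conOri u v (liftOri G u v r'') = r'' := by
  funext a b
  apply bool_ext
  rw [conOri_eq_true]
  constructor
  · rintro ⟨x, y, hx, hy, hr⟩
    rw [← hx, ← hy]
    exact (liftOri_eq_true.1 hr).1
  · intro h
    obtain ⟨x, y, hxy, hx, hy⟩ := con_adj_del (hA.1 _ _ h)
    refine ⟨x, y, hx, hy, liftOri_eq_true.2 ⟨?_, hxy⟩⟩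
    rw [hx, hy]
    exact h

lemma lift_con_rt {u v : V} {r : V → V → Bool} (hB : BCond G u v r) :
    liftOri G u v (conOri u v r) = r := by
  obtain ⟨hAO, huv', hvu'⟩ := hB
  funext x y
  apply bool_ext
  rw [liftOri_eq_true, conOri_eq_true]
  constructor
  · rintro ⟨⟨x', y', hx', hy', hr'⟩, hxy⟩
    cases hrxy : r x y with
    | true => rfl
    | false =>
      exfalso
      have hyx : r y x = true := by
        have hiff := hAO.2.1 x y hxy
        rw [hrxy] at hiff
        simpa using hiff
      have hj1 : Jrel u v y' y := Quotient.exact hy'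
      have hj2 : Jrel u v x x' := Quotient.exact hx'.symm
      have hcyc : TransGen (Wrel (fun x y => r x y = true) u v) y y :=
        TransGen.tail (TransGen.single ⟨x, hyx, hj2⟩) ⟨y', hr', hj1⟩
      exact tg_wrel_cycle hAO.2.2 huv' hvu' hcyc
  · intro hr
    exact ⟨⟨x, y, rfl, rfl, hr⟩, hAO.1 _ _ hr⟩

lemma card_B_eq_con {u v : V} (huv : G.Adj u v) :
    Nat.card {r : V → V → Bool // BCond G u v r} =
    Nat.card {r'' : Quotient (mSetoid u v) → Quotient (mSetoid u v) → Bool //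
      IsAcyclicOrientation (contractG G u v) r''} := by
  apply Nat.card_eq_of_bijective (f := fun r => ⟨conOri u v r.1, isAO_conOri r.2⟩)
  constructor
  · intro r1 r2 heq
    rw [Subtype.mk_eq_mk] at heq
    apply Subtype.ext
    rw [← lift_con_rt r1.2, ← lift_con_rt r2.2, heq]
  · intro r''
    exact ⟨⟨liftOri G u v r''.1, bCond_liftOri huv r''.2⟩,
      Subtype.ext (con_lift_rt r''.2)⟩

end Contract2

section Colorings
variable {V : Type*} [Fintype V] [DecidableEq V] {G : SimpleGraph V} [DecidableRel G.Adj]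

lemma nat_card_subtype_split {α : Type*} [Finite α] (p q : α → Prop) :
    Nat.card {x // p x ∧ q x} + Nat.card {x // p x ∧ ¬ q x} = Nat.card {x // p x} := by
  classical
  rw [← Nat.card_sum]
  apply Nat.card_congr
  exact {
    toFun := fun x => match x with
      | Sum.inl x => ⟨x.1, x.2.1⟩
      | Sum.inr x => ⟨x.1, x.2.1⟩
    invFun := fun x => if h : q x.1 then Sum.inl ⟨x.1, x.2, h⟩ else Sum.inr ⟨x.1, x.2, h⟩
    left_inv := by
      rintro (⟨x, hp, hq⟩ | ⟨x, hp, hq⟩)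
      · simp [dif_pos hq]
      · simp [dif_neg hq]
    right_inv := by
      rintro ⟨x, hp⟩
      by_cases h : q x
      · simp [dif_pos h]
      · simp [dif_neg h] }

/-- Proper colorings of `G` are proper colorings of `G - {u,v}` that separate `u,v`. -/
lemma proper_iff_del {u v : V} (huv : G.Adj u v) {n : ℕ} (c : V → Fin n) :
    (∀ x y, G.Adj x y → c x ≠ c y) ↔
    ((∀ x y, (G.deleteEdges {s(u, v)}).Adj x y → c x ≠ c y) ∧ ¬ c u = c v) := by
  constructor
  · intro h
    exact ⟨fun x y hxy => h x y (del_adj_iff.1 hxy).1, h u v huv⟩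
  · rintro ⟨h1, h2⟩ x y hxy
    by_cases he : s(x, y) = s(u, v)
    · rcases Sym2.eq_iff.1 he with ⟨he1, he2⟩ | ⟨he1, he2⟩
      · rw [he1, he2]; exact h2
      · rw [he1, he2]; exact fun hc => h2 hc.symm
    · exact h1 x y (del_adj_iff.2 ⟨hxy, he⟩)

/-- Colorings of the contraction correspond to colorings of the deletion that agree
on `u,v`. -/
lemma card_color_con {u v : V} (huv : G.Adj u v) (n : ℕ) :
    Nat.card {c : V → Fin n // (∀ x y, (G.deleteEdges {s(u, v)}).Adj x y → c x ≠ c y) ∧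
      c u = c v} =
    Nat.card {c : Quotient (mSetoid u v) → Fin n //
      ∀ a b, (contractG G u v).Adj a b → c a ≠ c b} := by
  symm
  apply Nat.card_eq_of_bijective (f := fun c => ⟨fun x => c.1 (Quotient.mk (mSetoid u v) x),
    ⟨fun x y hxy hc => c.2 _ _ (del_adj_con hxy) hc,
      congrArg c.1 (mk_u_eq_mk_v u v)⟩⟩)
  constructor
  · intro c1 c2 heq
    rw [Subtype.mk_eq_mk] at heq
    apply Subtype.ext
    funext a
    obtain ⟨x⟩ := a
    exact congrFun heq x
  · rintro ⟨c, hpr, hcuv⟩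
    have hresp : ∀ x y : V, Jrel u v x y → c x = c y := by
      rintro x y (rfl | ⟨rfl, rfl⟩ | ⟨rfl, rfl⟩)
      · rfl
      · exact hcuv
      · exact hcuv.symm
    refine ⟨⟨Quotient.lift c hresp, ?_⟩, ?_⟩
    · intro a b hab hc
      obtain ⟨x, y, hxy, hx, hy⟩ := con_adj_del hab
      rw [← hx, ← hy] at hc
      exact hpr x y hxy hc
    · exact Subtype.ext rfl

end Colorings

section Existence
variable {V : Type*} [Fintype V] [DecidableEq V]

lemma exists_acyclic_orientation (G : SimpleGraph V) [DecidableRel G.Adj] :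
    ∃ r : V → V → Bool, IsAcyclicOrientation G r := by
  classical
  let f := Fintype.equivFin V
  refine ⟨fun x y => G.Adj x y && decide (f x < f y), fun x y hxy => ?_, fun x y hxy => ?_,
    fun w hw => ?_⟩
  · simp only [Bool.and_eq_true, decide_eq_true_eq] at hxy
    exact hxy.1
  · have hne : f x ≠ f y := fun hc => hxy.ne (f.injective hc)
    simp only [Bool.and_eq_true, decide_eq_true_eq]
    constructor
    · rintro ⟨_, hlt⟩ ⟨_, hlt'⟩
      exact absurd (hlt.trans hlt') (lt_irrefl _)
    · intro hn
      refine ⟨hxy, ?_⟩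
      rcases lt_or_gt_of_ne hne with h | h
      · exact h
      · exact absurd ⟨hxy.symm, h⟩ hn
  · have : ∀ a b, TransGen (fun x y => (G.Adj x y && decide (f x < f y)) = true) a b →
        f a < f b := by
      intro a b h
      induction h with
      | single h =>
        simp only [Bool.and_eq_true, decide_eq_true_eq] at h
        exact h.2
      | tail _ h ih =>
        simp only [Bool.and_eq_true, decide_eq_true_eq] at h
        exact ih.trans h.2
    exact absurd (this w w hw) (lt_irrefl _)

end Existence

universe u

theorem main_ind (m : ℕ) : ∀ (V : Type u) (_ : Fintype V) (_ : DecidableEq V)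
    (G : SimpleGraph V) (_ : DecidableRel G.Adj), G.edgeFinset.card = m →
    ∃ P : Polynomial ℤ,
      (∀ n : ℕ, P.eval (n : ℤ) =
        Nat.card {c : V → Fin n // ∀ v w, G.Adj v w → c v ≠ c w}) ∧
      ((Nat.card {r : V → V → Bool // IsAcyclicOrientation G r} : ℤ) =
        (-1) ^ (Fintype.card V) * P.eval (-1)) := by
  induction m using Nat.strong_induction_on with
  | _ m ih =>
  intro V iV dV G aV hm
  letI := iV; letI := dV; letI := aV
  by_cases hE : G.edgeFinset = ∅
  · -- base case : no edges
    have hAdj : ∀ x y : V, ¬ G.Adj x y := by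
      intro x y h
      have : s(x, y) ∈ G.edgeFinset := SimpleGraph.mem_edgeFinset.2 h
      simp [hE] at this
    refine ⟨Polynomial.X ^ (Fintype.card V), ?_, ?_⟩
    · intro n
      have e1 : {c : V → Fin n // ∀ v w, G.Adj v w → c v ≠ c w} ≃ (V → Fin n) :=
        Equiv.subtypeUnivEquiv (fun c v w h => absurd h (hAdj v w))
      rw [Nat.card_congr e1, Nat.card_fun, Nat.card_eq_fintype_card (α := Fin n),
        Nat.card_eq_fintype_card (α := V), Fintype.card_fin]
      simp only [Polynomial.eval_pow, Polynomial.eval_X]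
      push_cast
      rfl
    · have hmem : IsAcyclicOrientation G (fun _ _ => false) := by
        refine ⟨fun v w h => by simp at h, fun v w h => absurd h (hAdj v w), fun w hw => ?_⟩
        cases hw with
        | single h => simp at h
        | tail _ h => simp at h
      have hone : Nat.card {r : V → V → Bool // IsAcyclicOrientation G r} = 1 := by
        rw [Nat.card_eq_one_iff_unique]
        refine ⟨⟨fun r1 r2 => ?_⟩, ⟨⟨_, hmem⟩⟩⟩
        apply Subtype.ext
        funext x y
        have h1 : r1.1 x y = false := by
          cases hb : r1.1 x y with
          | true => exact absurd (r1.2.1 x y hb) (hAdj x y)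
          | false => rfl
        have h2 : r2.1 x y = false := by
          cases hb : r2.1 x y with
          | true => exact absurd (r2.2.1 x y hb) (hAdj x y)
          | false => rfl
        rw [h1, h2]
      rw [hone]
      simp only [Polynomial.eval_pow, Polynomial.eval_X]
      rw [← mul_pow]
      norm_num
  · -- inductive step
    obtain ⟨u, v, huv⟩ : ∃ u v : V, G.Adj u v := by
      obtain ⟨e, he⟩ := Finset.nonempty_of_ne_empty hE
      refine Sym2.ind (fun x y he => ?_) e he
      exact ⟨x, y, SimpleGraph.mem_edgeFinset.1 he⟩
    have hmem_e : s(u, v) ∈ G.edgeFinset := SimpleGraph.mem_edgeFinset.2 huv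
    have hm1 : 1 ≤ m := by
      rw [← hm]
      exact Finset.card_pos.2 ⟨_, hmem_e⟩
    have hDfin : (G.deleteEdges {s(u, v)}).edgeFinset = G.edgeFinset \ {s(u, v)} := by
      ext e'
      simp [SimpleGraph.mem_edgeFinset, SimpleGraph.edgeSet_deleteEdges]
    have hDcard : (G.deleteEdges {s(u, v)}).edgeFinset.card = m - 1 := by
      rw [hDfin, Finset.card_sdiff_of_subset (by simpa using hmem_e), Finset.card_singleton, hm]
    have hsub : (contractG G u v).edgeFinset ⊆
        (G.deleteEdges {s(u, v)}).edgeFinset.image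
          (Sym2.map (Quotient.mk (mSetoid u v))) := by
      intro e'
      refine Sym2.ind (fun a b he' => ?_) e'
      rw [Finset.mem_image]
      rw [SimpleGraph.mem_edgeFinset, SimpleGraph.mem_edgeSet] at he'
      obtain ⟨x, y, hxy, hx, hy⟩ := con_adj_del he'
      exact ⟨s(x, y), SimpleGraph.mem_edgeFinset.2 hxy, by rw [Sym2.map_pair_eq, hx, hy]⟩
    have hG'card : (contractG G u v).edgeFinset.card < m := by
      calc (contractG G u v).edgeFinset.card
          ≤ ((G.deleteEdges {s(u, v)}).edgeFinset.image
              (Sym2.map (Quotient.mk (mSetoid u v)))).card := Finset.card_le_card hsub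
        _ ≤ (G.deleteEdges {s(u, v)}).edgeFinset.card := Finset.card_image_le
        _ = m - 1 := hDcard
        _ < m := by omega
    obtain ⟨PD, hPD1, hPD2⟩ := ih (m - 1) (by omega) V iV dV
      (G.deleteEdges {s(u, v)}) (delDec G u v) hDcard
    obtain ⟨PC, hPC1, hPC2⟩ := ih (contractG G u v).edgeFinset.card hG'card
      (Quotient (mSetoid u v)) (mQuotFintype u v) (mQuotDecEq u v)
      (contractG G u v) (contractGDec G u v) rfl
    refine ⟨PD - PC, ?_, ?_⟩
    · intro n
      rw [Polynomial.eval_sub, hPD1 n, hPC1 n]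
      have hsplit := nat_card_subtype_split
        (fun c : V → Fin n => ∀ x y, (G.deleteEdges {s(u, v)}).Adj x y → c x ≠ c y)
        (fun c => c u = c v)
      have hG : Nat.card {c : V → Fin n // ∀ v w, G.Adj v w → c v ≠ c w} =
          Nat.card {c : V → Fin n //
            (∀ x y, (G.deleteEdges {s(u, v)}).Adj x y → c x ≠ c y) ∧ ¬ c u = c v} :=
        Nat.card_congr (Equiv.subtypeEquivRight (fun c => proper_iff_del huv c))
      have hCon := card_color_con (G := G) huv n
      rw [hG, ← hCon, ← hsplit]
      push_cast
      ring
    · have hsplitA := card_AG_split huv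
      have hBcon : Nat.card {r : V → V → Bool //
          IsAcyclicOrientation (G.deleteEdges {s(u, v)}) r ∧
          ¬ ReflTransGen (fun x y => r x y = true) u v ∧
          ¬ ReflTransGen (fun x y => r x y = true) v u} =
          Nat.card {r'' : Quotient (mSetoid u v) → Quotient (mSetoid u v) → Bool //
            IsAcyclicOrientation (contractG G u v) r''} := card_B_eq_con huv
      rw [hsplitA, hBcon]
      push_cast
      rw [hPD2, hPC2, card_mQuot huv.ne, Polynomial.eval_sub]
      have hcV : 1 ≤ Fintype.card V := @Fintype.card_pos V _ ⟨u⟩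
      have hstep : ((-1 : ℤ)) ^ (Fintype.card V) =
          (-1) ^ (Fintype.card V - 1) * (-1) := by
        conv_lhs => rw [← Nat.sub_add_cancel hcV]
        rw [pow_succ]
      have h2 : ((-1 : ℤ)) ^ (Fintype.card V - 1) = -(-1) ^ (Fintype.card V) := by
        rw [hstep]; ring
      rw [h2]
      ring

set_option maxHeartbeats 1000000 in
/-- A finite graph without looping edges admits an acyclic orientation, and the number of
acyclic orientations equals `(-1)^{|V|} P(-1)` where `P` is the chromatic polynomial,
i.e. the (unique) polynomial with `P(n)` = number of proper colorings with `n` colors. -/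
theorem acyclic_orientations_chromatic {V : Type*} [Fintype V] [DecidableEq V]
    (G : SimpleGraph V) [DecidableRel G.Adj] (P : Polynomial ℤ)
    (hP : ∀ n : ℕ, P.eval (n : ℤ)
      = Nat.card {c : V → Fin n // ∀ v w, G.Adj v w → c v ≠ c w}) :
    (∃ r : V → V → Bool, IsAcyclicOrientation G r) ∧
    (Nat.card {r : V → V → Bool // IsAcyclicOrientation G r} : ℤ)
      = (-1) ^ (Fintype.card V) * P.eval (-1) := by
  obtain ⟨P₀, h1, h2⟩ := main_ind G.edgeFinset.card V inferInstance inferInstance G inferInstance rfl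
  have hPP : P = P₀ := by
    apply Polynomial.eq_of_infinite_eval_eq
    apply Set.infinite_of_injective_forall_mem
      (f := fun n : ℕ => (n : ℤ))
    · exact fun a b hab => Nat.cast_injective hab
    · intro n
      simp only [Set.mem_setOf_eq]
      rw [hP n, h1 n]
  refine ⟨exists_acyclic_orientation G, ?_⟩
  rw [hPP]
  exact h2
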